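/- Let m ≥ 3 be an integer with m ≢ 0 (mod 4), and let a₁,…,aₙ be positive integers with gcd(a₁,…,aₙ) = 1. Then for every N ∈ ℤ₂ the equation a₁P_m(x₁)+⋯+aₙP_m(xₙ) = N has a solution (x₁,…,xₙ) ∈ ℤ₂ⁿ; that is, ⟨a₁,…,aₙ⟩_m is universal over ℤ₂. -/

import Mathlib

/-!
Primitivity gives an odd coefficient `aᵢ`, a unit of `ℤ₂`, so it suffices to solve `P_m(x) = M`
for every `M ∈ ℤ₂` in the single variable `xᵢ`. This is a quadratic equation, solved by Hensel's
lemma from a point where it is even and its derivative odd: for odd `m`, the equation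
`2 P_m(x) = 2M` at `x = 0`; for `m = 4t + 2`, the equation `P_m(x) = 2t(x² - x) + x = M` at `x = M`.
-/

open Polynomial

theorem Finset.exists_not_dvd_of_gcd_eq_one {ι α : Type*} [CommMonoidWithZero α]
    [NormalizedGCDMonoid α] {s : Finset ι} {f : ι → α} (hs : s.gcd f = 1) {p : α}
    (hp : ¬IsUnit p) : ∃ i ∈ s, ¬p ∣ f i := by
  by_contra! h
  exact hp (isUnit_of_dvd_one (hs ▸ Finset.dvd_gcd h))

namespace PadicInt

variable {p : ℕ} [Fact p.Prime]

theorem isUnit_iff_not_dvd {z : ℤ_[p]} : IsUnit z ↔ ¬(p : ℤ_[p]) ∣ z := by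
  rw [← norm_lt_one_iff_dvd, ← not_isUnit_iff, not_not]

theorem isUnit_intCast_iff {k : ℤ} : IsUnit (k : ℤ_[p]) ↔ ¬(p : ℤ) ∣ k := by
  rw [← norm_int_lt_one_iff_dvd, ← not_isUnit_iff, not_not]

theorem isUnit_one_add_mul (c : ℤ_[p]) : IsUnit (1 + p * c) := by
  rw [isUnit_iff_not_dvd, dvd_add_left (dvd_mul_right _ _)]
  exact fun h => p_nonunit (isUnit_of_dvd_one h)

theorem exists_aeval_eq_zero_of_isUnit_derivative {F : ℤ_[p][X]} {a : ℤ_[p]}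
    (hFa : (p : ℤ_[p]) ∣ F.aeval a) (hF'a : IsUnit (F.derivative.aeval a)) :
    ∃ z : ℤ_[p], F.aeval z = 0 := by
  have hnorm : ‖F.aeval a‖ < ‖F.derivative.aeval a‖ ^ 2 := by
    rwa [isUnit_iff.mp hF'a, one_pow, norm_lt_one_iff_dvd]
  obtain ⟨z, hz, -⟩ := hensels_lemma hnorm
  exact ⟨z, hz⟩

theorem exists_quadratic_eq_zero {u v w : ℤ_[p]} (a : ℤ_[p])
    (ha : (p : ℤ_[p]) ∣ u * a ^ 2 + v * a + w) (hv : IsUnit (2 * u * a + v)) :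
    ∃ z : ℤ_[p], u * z ^ 2 + v * z + w = 0 := by
  have hF (x : ℤ_[p]) : (C u * X ^ 2 + C v * X + C w).aeval x = u * x ^ 2 + v * x + w := by
    simp
  have hF' (x : ℤ_[p]) :
      (C u * X ^ 2 + C v * X + C w).derivative.aeval x = 2 * u * x + v := by
    simp
    ring
  obtain ⟨z, hz⟩ := exists_aeval_eq_zero_of_isUnit_derivative (F := C u * X ^ 2 + C v * X + C w)
    (a := a) (by rwa [hF]) (by rwa [hF'])
  exact ⟨z, by rwa [hF] at hz⟩

end PadicInt

open PadicInt in
theorem exists_two_mul_polygonal_eq_two_mul {m : ℤ} (hm4 : ¬(4 : ℤ) ∣ m) (M : ℤ_[2]) :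
    ∃ x : ℤ_[2], ((m : ℤ_[2]) - 2) * (x ^ 2 - x) + 2 * x = 2 * M := by
  obtain ⟨k, rfl | rfl⟩ := Int.even_or_odd' m
  · obtain ⟨t, rfl⟩ : ∃ t, k = 2 * t + 1 := by
      obtain ⟨t, ht | ht⟩ := Int.even_or_odd' k
      · exact absurd ⟨t, by omega⟩ hm4
      · exact ⟨t, ht⟩
    have hunit : IsUnit (2 * (2 * (t : ℤ_[2])) * M + (1 - 2 * t)) := by
      convert isUnit_one_add_mul (p := 2) (2 * t * M - t) using 1
      push_cast
      ring
    obtain ⟨x, hx⟩ := exists_quadratic_eq_zero (u := 2 * (t : ℤ_[2])) (w := -M) M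
      ⟨t * M ^ 2 - t * M, by push_cast; ring⟩ hunit
    exact ⟨x, by push_cast; linear_combination 2 * hx⟩
  · have hunit : IsUnit (((4 - (2 * k + 1) : ℤ) : ℤ_[2])) :=
      isUnit_intCast_iff.mpr (by omega)
    obtain ⟨x, hx⟩ := exists_quadratic_eq_zero (u := ((2 * k + 1 : ℤ) : ℤ_[2]) - 2)
      (w := -2 * M) 0 ⟨-M, by simp⟩ (by simpa using hunit)
    exact ⟨x, by push_cast at hx ⊢; linear_combination hx⟩

theorem stmt10_general (m : ℤ) (hm4 : ¬ (4 : ℤ) ∣ m)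
    (n : ℕ) (a : Fin n → ℤ)
    (hprim : Finset.univ.gcd a = 1) :
    ∀ N : ℤ_[2],
      ∃ x : Fin n → ℤ_[2],
        ∑ i, (a i : ℤ_[2]) * (((m : ℤ_[2]) - 2) * ((x i) ^ 2 - x i) + 2 * x i)
          = 2 * N := by
  intro N
  obtain ⟨i, -, hi⟩ := Finset.exists_not_dvd_of_gcd_eq_one hprim (p := 2) (by decide)
  obtain ⟨b, hb⟩ := (PadicInt.isUnit_intCast_iff.mpr hi).exists_right_inv
  obtain ⟨x, hx⟩ := exists_two_mul_polygonal_eq_two_mul hm4 (b * N)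
  refine ⟨Pi.single i x, ?_⟩
  rw [Fintype.sum_eq_single i fun j hj => by simp [Pi.single_eq_of_ne hj], Pi.single_eq_same, hx]
  linear_combination 2 * N * hb

/-- a primitive `m`-gonal form with `m ≢ 0 (mod 4)` is universal over `ℤ₂`.
The `m`-gonal equation is stated multiplied by `2` (an equivalent formulation, since `2` is a
nonzerodivisor in `ℤ₂`). -/
theorem stmt10 (m : ℤ) (hm : 3 ≤ m) (hm4 : ¬ (4 : ℤ) ∣ m)
    (n : ℕ) (a : Fin n → ℤ) (ha : ∀ i, 0 < a i)
    (hprim : Finset.univ.gcd a = 1) :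
    ∀ N : ℤ_[2],
      ∃ x : Fin n → ℤ_[2],
        ∑ i, (a i : ℤ_[2]) * (((m : ℤ_[2]) - 2) * ((x i) ^ 2 - x i) + 2 * x i)
          = 2 * N :=
  stmt10_general m hm4 n a hprim
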